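/- Degree principle: Let f_1,…,f_m ∈ ℝ[X_1,…,X_n] be symmetric polynomials each of total degree at most d, and let S ⊆ ℝ^n be a set with the property that for all x ∈ S and all y ∈ ℝ^n, if sign(f_i(y)) = sign(f_i(x)) for every i ∈ {1,…,m}, then y ∈ S (i.e., S is a semi-algebraic set described by the polynomials f_1,…,f_m via a Boolean combination of sign conditions). Set k := max{2, d}. Then S ≠ ∅ if and only if S ∩ A_k ≠ ∅. -/

import Mathlib

/-!
A symmetric polynomial of degree at most `k` is a polynomial in the elementary symmetric
polynomials `e_1, …, e_k`, which by Newton's identities are determined by the power sums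
`p_1, …, p_k`. So it suffices to move any point `x` to a point with the same `p_1, …, p_k` and
at most `k` distinct coordinates. The fibre `{p_i = p_i(x), i ≤ k}` is compact because `k ≥ 2`
fixes `p_2`; at a minimiser of `p_{k+1}` on it, the Lagrange condition makes every coordinate a
root of one nonzero polynomial of degree at most `k`.
-/

open MvPolynomial Finset

section Newton

variable {σ K : Type*} [Fintype σ] [Field K] [CharZero K]

theorem eval_esymm_eq_of_sum_pow_eq {k : ℕ} {x y : σ → K}
    (h : ∀ i ≤ k, ∑ j, x j ^ i = ∑ j, y j ^ i) :
    ∀ i ≤ k, eval x (esymm σ K i) = eval y (esymm σ K i) := by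
  intro i
  induction i using Nat.strong_induction_on with
  | _ i ih =>
    intro hik
    rcases Nat.eq_zero_or_pos i with rfl | hi
    · simp
    -- Newton's identity expresses `i * e_i` through the `e_a`, `a < i`, and the `p_b`, `b ≤ i`.
    have newton (z : σ → K) := congrArg (eval z) (mul_esymm_eq_sum σ K i)
    simp only [map_mul, map_sum, map_pow, map_neg, map_one, map_natCast] at newton
    refine mul_left_cancel₀ (Nat.cast_ne_zero.mpr hi.ne' : (i : K) ≠ 0) ?_
    rw [newton, newton]
    refine congrArg _ (Finset.sum_congr rfl fun a ha => ?_)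
    rw [Finset.mem_filter, Finset.HasAntidiagonal.mem_antidiagonal] at ha
    simp only [psum, map_sum, map_pow, eval_X]
    rw [ih a.1 ha.2 (by omega), h a.2 (by omega)]

end Newton

section GradedAeval

variable {σ τ R : Type*} [CommSemiring R] {g : σ → MvPolynomial τ R} {w : σ → ℕ}

theorem isHomogeneous_aeval_monomial (hg : ∀ i, (g i).IsHomogeneous (w i))
    (u : σ →₀ ℕ) (r : R) :
    (aeval g (monomial u r)).IsHomogeneous (Finsupp.weight w u) := by
  have hprod := IsHomogeneous.prod u.support (fun i => g i ^ u i) _ fun i _ => (hg i).pow (u i)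
  rw [aeval_monomial, Finsupp.weight_apply, Finsupp.sum, Finsupp.prod, algebraMap_eq]
  convert (isHomogeneous_C τ r).mul hprod using 1
  simp [mul_comm]

theorem homogeneousComponent_aeval (hg : ∀ i, (g i).IsHomogeneous (w i)) (δ : ℕ)
    (q : MvPolynomial σ R) :
    homogeneousComponent δ (aeval g q) = aeval g (weightedHomogeneousComponent w δ q) := by
  classical
  induction q using MvPolynomial.induction_on' with
  | monomial u r =>
    rw [homogeneousComponent_of_mem (isHomogeneous_aeval_monomial hg u r),
      weightedHomogeneousComponent_of_mem (isWeightedHomogeneous_monomial w u r rfl)]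
    split_ifs <;> simp
  | add p q hp hq => simp only [map_add, hp, hq]

theorem exists_weightedTotalDegree_le_aeval_eq (hg : ∀ i, (g i).IsHomogeneous (w i))
    {k : ℕ} (q : MvPolynomial σ R) (hq : (aeval g q).totalDegree ≤ k) :
    ∃ p : MvPolynomial σ R, p.weightedTotalDegree w ≤ k ∧ aeval g p = aeval g q := by
  classical
  refine ⟨∑ δ ∈ range (k + 1), weightedHomogeneousComponent w δ q, ?_, ?_⟩
  · refine Finset.sup_le fun u hu => ?_
    rw [mem_support_iff, coeff_sum] at hu
    simp only [coeff_weightedHomogeneousComponent, Finset.sum_ite_eq, mem_range] at hu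
    by_contra hlt
    exact hu (if_neg (by omega))
  · simp only [map_sum, ← homogeneousComponent_aeval hg]
    conv_rhs => rw [← sum_homogeneousComponent (aeval g q)]
    refine (Finset.sum_subset (range_subset_range.mpr (by omega)) fun δ _ hδ => ?_).symm
    exact homogeneousComponent_eq_zero _ _ (by simpa using hδ)

end GradedAeval

section Symmetric

variable {σ R : Type*} [Fintype σ] [CommRing R]

theorem isHomogeneous_esymm (i : ℕ) : (esymm σ R i).IsHomogeneous i := by
  refine IsHomogeneous.sum _ _ _ fun t ht => ?_
  simpa [(mem_powersetCard.mp ht).2] using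
    IsHomogeneous.prod t (fun j => X j) (fun _ => 1) fun j _ => isHomogeneous_X R j

theorem eval_eq_of_eval_esymm_eq {f : MvPolynomial σ R} (hf : f.IsSymmetric) {k : ℕ}
    (hk : f.totalDegree ≤ k) {x y : σ → R}
    (h : ∀ i ≤ k, eval x (esymm σ R i) = eval y (esymm σ R i)) :
    eval x f = eval y f := by
  obtain ⟨q, hq⟩ := esymmAlgHom_surjective R (le_refl (Fintype.card σ)) ⟨f, hf⟩
  replace hq : aeval (fun i : Fin _ => esymm σ R (i + 1)) q = f := by
    rw [← esymmAlgHom_apply, hq]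
  have hk' : (aeval (fun i : Fin _ => esymm σ R (i + 1)) q).totalDegree ≤ k := hq ▸ hk
  -- With variable `i` of weight `i + 1`, a monomial of `p` only involves `e_{i+1}` for `i + 1 ≤ k`.
  obtain ⟨p, hpk, hp⟩ := exists_weightedTotalDegree_le_aeval_eq
    (w := fun i : Fin _ => (i : ℕ) + 1) (fun i => isHomogeneous_esymm _) q hk'
  rw [← hq, ← hp, aeval_eq_bind₁]
  simp only [eval, eval₂Hom_bind₁]
  refine eval₂_congr _ _ _ fun {i u} hi hu => h _ (le_trans ?_ hpk)
  exact (Finsupp.le_weight_of_ne_zero' _ (Finsupp.mem_support_iff.mp hi)).trans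
    (le_weightedTotalDegree (fun i : Fin _ => (i : ℕ) + 1) (mem_support_iff.mpr hu))

end Symmetric

section FewDistinctValues

theorem ncard_range_le_of_sum_mul_pow_eq_zero {K ι : Type*} [CommRing K] [IsDomain K] {k : ℕ}
    (c : Fin (k + 1) → K) (hc : c ≠ 0) (y : ι → K)
    (h : ∀ j, ∑ i, c i * y j ^ (i : ℕ) = 0) :
    (Set.range y).ncard ≤ k := by
  classical
  set Q := (Polynomial.degreeLTEquiv K (k + 1)).symm c
  have hQc : Polynomial.degreeLTEquiv K (k + 1) Q = c := LinearEquiv.apply_symm_apply _ c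
  have hQ : (Q : Polynomial K) ≠ 0 := fun h0 =>
    hc (by rw [← hQc, Submodule.coe_eq_zero.mp h0, map_zero])
  have hdeg : (Q : Polynomial K).natDegree ≤ k := by
    have := Polynomial.mem_degreeLT.mp Q.2
    rw [← Nat.lt_succ_iff, Polynomial.natDegree_lt_iff_degree_lt hQ]
    exact_mod_cast this
  have hroots : Set.range y ⊆ (Q : Polynomial K).roots.toFinset := by
    rintro _ ⟨j, rfl⟩
    rw [Finset.mem_coe, Multiset.mem_toFinset, Polynomial.mem_roots hQ, Polynomial.IsRoot,
      Polynomial.eval_eq_sum_degreeLTEquiv Q.2]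
    simpa [hQc] using h j
  calc (Set.range y).ncard ≤ (Q : Polynomial K).roots.toFinset.card := by
        simpa using Set.ncard_le_ncard hroots
    _ ≤ (Q : Polynomial K).roots.card := Multiset.toFinset_card_le _
    _ ≤ k := (Polynomial.card_roots' _).trans hdeg

variable {ι : Type*} [Fintype ι]

theorem hasStrictFDerivAt_sum_pow (m : ℕ) (y : ι → ℝ) :
    HasStrictFDerivAt (fun z : ι → ℝ => ∑ j, z j ^ (m + 1))
      (∑ j, ((m + 1 : ℝ) * y j ^ m) • ContinuousLinearMap.proj (R := ℝ) (φ := fun _ : ι => ℝ) j)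
      y := by
  refine HasStrictFDerivAt.fun_sum fun j _ => ?_
  have h := (hasStrictDerivAt_pow (m + 1) (y j)).comp_hasStrictFDerivAt y
    (hasStrictFDerivAt_apply (𝕜 := ℝ) j y)
  simp only [Nat.cast_add, Nat.cast_one, add_tsub_cancel_right] at h
  exact h

theorem isBounded_setOf_sum_sq_le (c : ℝ) :
    Bornology.IsBounded {y : ι → ℝ | ∑ j, y j ^ 2 ≤ c} := by
  refine (Metric.isBounded_closedBall (x := 0) (r := √c)).subset fun y hy => ?_
  rw [mem_closedBall_zero_iff, pi_norm_le_iff_of_nonneg (Real.sqrt_nonneg c)]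
  exact fun j => Real.abs_le_sqrt
    ((Finset.single_le_sum (fun j _ => sq_nonneg (y j)) (mem_univ j)).trans hy)

theorem ncard_range_le_of_isLocalExtrOn_sum_pow {k : ℕ} {y₀ : ι → ℝ}
    (hextr : IsLocalExtrOn (fun z : ι → ℝ => ∑ j, z j ^ (k + 1))
      {z | ∀ i : Fin k, ∑ j, z j ^ ((i : ℕ) + 1) = ∑ j, y₀ j ^ ((i : ℕ) + 1)} y₀) :
    (Set.range y₀).ncard ≤ k := by
  obtain ⟨Λ, Λ₀, hne, hsum⟩ := hextr.exists_multipliers_of_hasStrictFDerivAt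
    (f := fun (i : Fin k) (z : ι → ℝ) => ∑ j, z j ^ ((i : ℕ) + 1))
    (fun i => hasStrictFDerivAt_sum_pow i y₀) (hasStrictFDerivAt_sum_pow k y₀)
  -- Every `y₀ j` is a root of the derivative of `∑ i, Λ i X^(i+1) + Λ₀ X^(k+1)`.
  let c : Fin (k + 1) → ℝ := Fin.snoc (fun i : Fin k => ((i : ℝ) + 1) * Λ i) (((k : ℝ) + 1) * Λ₀)
  refine ncard_range_le_of_sum_mul_pow_eq_zero c (fun hc => hne ?_) y₀ fun j => ?_
  · have hΛ (i : Fin k) : Λ i = 0 := by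
      simpa [c, Nat.cast_add_one_ne_zero] using congrFun hc i.castSucc
    have hΛ₀ : Λ₀ = 0 := by
      simpa [c, Nat.cast_add_one_ne_zero] using congrFun hc (Fin.last k)
    exact Prod.ext (funext hΛ) hΛ₀
  · classical
    have h := congrArg (fun L => L (Pi.single j 1)) hsum
    simpa [Fin.sum_univ_castSucc, c, Pi.single_apply, mul_left_comm, mul_assoc] using h

theorem exists_ncard_range_le_sum_pow_eq {k : ℕ} (hk : 2 ≤ k) (x : ι → ℝ) :
    ∃ y : ι → ℝ, (Set.range y).ncard ≤ k ∧ ∀ i ≤ k, ∑ j, y j ^ i = ∑ j, x j ^ i := by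
  set V := {z : ι → ℝ | ∀ i : Fin k, ∑ j, z j ^ ((i : ℕ) + 1) = ∑ j, x j ^ ((i : ℕ) + 1)}
  have hV : IsCompact V := by
    refine Metric.isCompact_of_isClosed_isBounded ?_
      ((isBounded_setOf_sum_sq_le (∑ j, x j ^ 2)).subset fun z hz => ?_)
    · simp only [V, Set.ofPred_forall]
      exact isClosed_iInter fun i => isClosed_eq (by fun_prop) (by fun_prop)
    · simpa using (hz ⟨1, by omega⟩).le
  obtain ⟨y, hyV, hmin⟩ := hV.exists_isMinOn ⟨x, fun _ => rfl⟩
    (by fun_prop : Continuous fun z : ι → ℝ => ∑ j, z j ^ (k + 1)).continuousOn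
  refine ⟨y, ncard_range_le_of_isLocalExtrOn_sum_pow ?_, fun i hi => ?_⟩
  · have hVy : {z | ∀ i : Fin k, ∑ j, z j ^ ((i : ℕ) + 1) = ∑ j, y j ^ ((i : ℕ) + 1)} = V := by
      simp only [V, hyV _]
    exact hVy ▸ IsMinFilter.isExtr hmin.localize
  · rcases i with _ | i
    · simp
    · exact hyV ⟨i, by omega⟩

end FewDistinctValues

/-- **Degree principle.**  If `S ⊆ ℝ^n` is a semi-algebraic set described by sign
conditions on symmetric polynomials `f_1,…,f_m` of degree at most `d`, then `S` is
nonempty iff it contains a point with at most `k := max 2 d` distinct coordinates. -/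
theorem degree_principle (n m d : ℕ) (f : Fin m → MvPolynomial (Fin n) ℝ)
    (hsym : ∀ i, (f i).IsSymmetric) (hdeg : ∀ i, (f i).totalDegree ≤ d)
    (S : Set (Fin n → ℝ))
    (hS : ∀ x ∈ S, ∀ y : Fin n → ℝ,
      (∀ i : Fin m, Real.sign (eval y (f i)) = Real.sign (eval x (f i))) → y ∈ S) :
    S.Nonempty ↔ ∃ y ∈ S, (Set.range y).ncard ≤ max 2 d := by
  refine ⟨fun ⟨x, hx⟩ => ?_, fun ⟨y, hy, _⟩ => ⟨y, hy⟩⟩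
  obtain ⟨y, hy, hpow⟩ := exists_ncard_range_le_sum_pow_eq (le_max_left 2 d) x
  have hesymm := eval_esymm_eq_of_sum_pow_eq hpow
  refine ⟨y, hS x hx y fun i => ?_, hy⟩
  rw [eval_eq_of_eval_esymm_eq (hsym i) ((hdeg i).trans (le_max_right 2 d)) hesymm]
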